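/- Let ρ_c > 0, R > 0, and let m, ρ : [0,R] → ℝ with m continuous, m(0) = 0, m differentiable on (0,R) with m′(r) = 4πr²ρ(r), ρ(r) ≥ ρ_c for all r ∈ (0,R), and suppose 2m(r)/r < 1 for all r ∈ (0,R] (no trapped shells). Then R < √(3/(8π ρ_c)). In particular, a regular hard star (for which ρ ≥ 1 in units where the critical density equals 1) has radius R < √(3/(8π)). -/

import Mathlib

open Real Set

/-! Since `ρ ≥ ρc`, the mass inside radius `R` is at least that of a homogeneous ball of
density `ρc`, namely `(4π/3) ρc R³`; the untrapped condition `2 m(R) < R` then forces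
`(8π/3) ρc R² < 1`. -/

theorem sub_le_sub_of_hasDerivAt_le {f g f' g' : ℝ → ℝ} {a b : ℝ} (hab : a ≤ b)
    (hf : ContinuousOn f (Icc a b)) (hg : ContinuousOn g (Icc a b))
    (hf' : ∀ x ∈ Ioo a b, HasDerivAt f (f' x) x) (hg' : ∀ x ∈ Ioo a b, HasDerivAt g (g' x) x)
    (hle : ∀ x ∈ Ioo a b, f' x ≤ g' x) : f b - f a ≤ g b - g a := by
  have hmono : MonotoneOn (g - f) (Icc a b) :=
    monotoneOn_of_hasDerivWithinAt_nonneg (convex_Icc a b) (hg.sub hf)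
      (by rw [interior_Icc]; exact fun x hx ↦ ((hg' x hx).sub (hf' x hx)).hasDerivWithinAt)
      (by rw [interior_Icc]; exact fun x hx ↦ sub_nonneg.2 (hle x hx))
  have := hmono (left_mem_Icc.2 hab) (right_mem_Icc.2 hab) hab
  simp only [Pi.sub_apply] at this
  linarith

theorem homogeneous_ball_mass_le {m ρ : ℝ → ℝ} {ρc R : ℝ} (hR : 0 ≤ R)
    (hmc : ContinuousOn m (Icc 0 R)) (hm0 : m 0 = 0)
    (hderiv : ∀ r ∈ Ioo (0:ℝ) R, HasDerivAt m (4 * π * r ^ 2 * ρ r) r)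
    (hρ : ∀ r ∈ Ioo (0:ℝ) R, ρc ≤ ρ r) :
    4 * π / 3 * ρc * R ^ 3 ≤ m R := by
  have hball : ∀ r ∈ Ioo (0:ℝ) R,
      HasDerivAt (fun r ↦ 4 * π / 3 * ρc * r ^ 3) (4 * π * r ^ 2 * ρc) r := fun r _ ↦
    ((hasDerivAt_pow 3 r).const_mul _).congr_deriv (by push_cast; ring)
  have := sub_le_sub_of_hasDerivAt_le hR (by fun_prop) hmc hball hderiv
    fun r hr ↦ mul_le_mul_of_nonneg_left (hρ r hr) (by positivity)
  simpa [hm0] using this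

theorem stmt3 (ρc R : ℝ) (hρc : 0 < ρc) (hR : 0 < R) (m ρ : ℝ → ℝ)
    (hmc : ContinuousOn m (Icc 0 R)) (hm0 : m 0 = 0)
    (hderiv : ∀ r ∈ Ioo (0:ℝ) R, HasDerivAt m (4 * π * r ^ 2 * ρ r) r)
    (hρ : ∀ r ∈ Ioo (0:ℝ) R, ρc ≤ ρ r)
    (htrap : ∀ r ∈ Ioc (0:ℝ) R, 2 * m r / r < 1) :
    R < Real.sqrt (3 / (8 * π * ρc)) := by
  have hmass := homogeneous_ball_mass_le hR.le hmc hm0 hderiv hρ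
  have huntrapped : 2 * m R < R := (div_lt_one hR).1 (htrap R ⟨hR, le_rfl⟩)
  have hR2 : R ^ 2 < 3 / (8 * π * ρc) := by
    rw [lt_div_iff₀ (by positivity)]
    nlinarith [pi_pos]
  exact (lt_sqrt hR.le).2 hR2
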